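/- Let G be a simplicial group, (g_i)_{i=n−1,…,0} ∈ W̄_n G, and (y_i)_i its image under (S_G)_n. Then for 1 ≤ k ≤ n and i ≤ k−2: y_i d_{k−1}⋯d_{i+1} s_i⋯s_{k−2} = (∏_{j=i+1}^{k−1} y_j^{−1} d_{k−1}⋯d_{i+1} s_i⋯s_{k−2}) (∏_{j=k}^{n−1} y_j^{−1} d_j⋯d_{i+1} s_i⋯s_{j−1}) (∏_{j=n−1}^{i} g_j d_j⋯d_{i+1} s_i⋯s_{n−1}). (This is the key identity showing the homotopy H is constant along S_G.) -/

import Mathlib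

namespace Paper

/-- clamped coface map `δ^k : [a] → [b]`. -/
def δOH (k a b : ℕ) : Fin (a+1) →o Fin (b+1) where
  toFun i := ⟨min (if (i:ℕ) < k then (i:ℕ) else (i:ℕ)+1) b, Nat.lt_succ_of_le (Nat.min_le_right _ _)⟩
  monotone' := by
    intro i j hij
    have h : (i:ℕ) ≤ (j:ℕ) := hij
    simp only [Fin.mk_le_mk]
    split_ifs <;> omega

/-- clamped codegeneracy map `σ^k : [a] → [b]`. -/
def σOH (k a b : ℕ) : Fin (a+1) →o Fin (b+1) where
  toFun i := ⟨min (if (i:ℕ) ≤ k then (i:ℕ) else (i:ℕ)-1) b, Nat.lt_succ_of_le (Nat.min_le_right _ _)⟩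
  monotone' := by
    intro i j hij
    have h : (i:ℕ) ≤ (j:ℕ) := hij
    simp only [Fin.mk_le_mk]
    split_ifs <;> omega

/-- `τ^k : [n] → [1]`, sending `[0, n-k]` to `0` and the rest to `1`. -/
def τOH (n k : ℕ) : Fin (n+1) →o Fin 2 where
  toFun i := if (i:ℕ) + k ≤ n then 0 else 1
  monotone' := by
    intro i j hij
    have h : (i:ℕ) ≤ (j:ℕ) := hij
    dsimp only
    split_ifs with h1 h2 h3
    · exact le_refl _
    · exact Fin.zero_le _
    · exact absurd h3 (by omega)
    · exact le_refl _

/-- application of `θ : [m] → [n]` to a natural number (clamped). -/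
def fApp {m n : ℕ} (θ : Fin (m+1) →o Fin (n+1)) (x : ℕ) : ℕ :=
  (θ ⟨min x m, Nat.lt_succ_of_le (Nat.min_le_right _ _)⟩ : Fin (n+1))

theorem fApp_mono {m n : ℕ} (θ : Fin (m+1) →o Fin (n+1)) {x y : ℕ} (h : x ≤ y) :
    fApp θ x ≤ fApp θ y :=
  Fin.le_def.mp (θ.monotone (Fin.mk_le_mk.mpr (by omega)))

theorem fApp_le {m n : ℕ} (θ : Fin (m+1) →o Fin (n+1)) (x : ℕ) : fApp θ x ≤ n :=
  Nat.lt_succ_iff.mp (Fin.isLt _)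

theorem fApp_coe {m n : ℕ} (θ : Fin (m+1) →o Fin (n+1)) (p : Fin (m+1)) :
    fApp θ (p:ℕ) = (θ p : ℕ) := by
  have hp : (⟨min (p:ℕ) m, Nat.lt_succ_of_le (Nat.min_le_right _ _)⟩ : Fin (m+1)) = p :=
    Fin.ext (show min (p:ℕ) m = (p:ℕ) from by have := p.isLt; omega)
  unfold fApp
  rw [hp]

/-- `Spl_{≤ p}(θ) : [p] → [pθ]`. -/
def splLe {m n : ℕ} (θ : Fin (m+1) →o Fin (n+1)) (p : Fin (m+1)) :
    Fin ((p:ℕ)+1) →o Fin ((θ p : ℕ)+1) where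
  toFun i := ⟨fApp θ (i:ℕ), by
    have h1 : fApp θ (i:ℕ) ≤ fApp θ (p:ℕ) := fApp_mono θ (by have := i.isLt; omega)
    have h2 : fApp θ (p:ℕ) = (θ p : ℕ) := fApp_coe θ p
    omega⟩
  monotone' := by
    intro a b hab
    have h : (a:ℕ) ≤ (b:ℕ) := hab
    simp only [Fin.mk_le_mk]
    exact fApp_mono θ h

/-- `Spl_{≥ p}(θ) : [m-p] → [n-pθ]`. -/
def splGe {m n : ℕ} (θ : Fin (m+1) →o Fin (n+1)) (p : Fin (m+1)) :
    Fin (m - (p:ℕ) + 1) →o Fin (n - (θ p : ℕ) + 1) where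
  toFun i := ⟨fApp θ ((i:ℕ) + (p:ℕ)) - (θ p : ℕ), by
    have h1 : fApp θ ((i:ℕ) + (p:ℕ)) ≤ n := fApp_le θ _
    omega⟩
  monotone' := by
    intro a b hab
    have h : (a:ℕ) ≤ (b:ℕ) := hab
    simp only [Fin.mk_le_mk]
    have := fApp_mono θ (show (a:ℕ) + (p:ℕ) ≤ (b:ℕ) + (p:ℕ) by omega)
    omega

/-- the restriction `θ|_[i]^[j] : [i] → [j]` of `θ` (clamped). -/
def restrictOH {m n : ℕ} (θ : Fin (m+1) →o Fin (n+1)) (i j : ℕ) : Fin (i+1) →o Fin (j+1) where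
  toFun k := ⟨min (fApp θ (k:ℕ)) j, Nat.lt_succ_of_le (Nat.min_le_right _ _)⟩
  monotone' := by
    intro a b hab
    have h : (a:ℕ) ≤ (b:ℕ) := hab
    simp only [Fin.mk_le_mk]
    have := fApp_mono θ h
    omega

/-- ascending product `f a * f (a+1) * ⋯ * f (b-1)`. -/
def aProd {γ : Type*} [Monoid γ] (f : ℕ → γ) (a : ℕ) : ℕ → γ
  | 0 => 1
  | b+1 => if a ≤ b then aProd f a b * f b else 1

/-- descending product `f (b-1) * f (b-2) * ⋯ * f a`. -/
def dProd {γ : Type*} [Monoid γ] (f : ℕ → γ) (a : ℕ) : ℕ → γ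
  | 0 => 1
  | b+1 => if a ≤ b then f b * dProd f a b else 1

end Paper
namespace Paper

/-- A simplicial group, given by levels, structure maps, functoriality,
and levelwise multiplicativity. -/
structure SGrp where
  obj : ℕ → Type
  grp : ∀ n, Group (obj n)
  map : ∀ {m n : ℕ}, (Fin (m+1) →o Fin (n+1)) → obj n → obj m
  map_id : ∀ {n : ℕ} (x : obj n), map OrderHom.id x = x
  map_comp : ∀ {l m n : ℕ} (α : Fin (l+1) →o Fin (m+1)) (β : Fin (m+1) →o Fin (n+1)) (x : obj n),
    map α (map β x) = map (β.comp α) x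
  map_mul : ∀ {m n : ℕ} (θ : Fin (m+1) →o Fin (n+1)) (x y : obj n),
    map θ (x * y) = map θ x * map θ y

attribute [instance] SGrp.grp

namespace SGrp

/-- face `d_k : G_N → G_{N-1}` -/
def face (G : SGrp) (k : ℕ) {N : ℕ} : G.obj N → G.obj (N-1) := G.map (δOH k (N-1) N)

/-- degeneracy `s_k : G_M → G_{M+1}` -/
def deg (G : SGrp) (k : ℕ) {M : ℕ} : G.obj M → G.obj (M+1) := G.map (σOH k (M+1) M)

/-- transport between levels (junk value `1` when levels differ). -/
def gcast (G : SGrp) {a : ℕ} (b : ℕ) (x : G.obj a) : G.obj b := if h : a = b then h ▸ x else 1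

/-- descending composite of faces `d_{i+c} d_{i+c-1} ⋯ d_{i+1}`. -/
def dcomp (G : SGrp) : (i c : ℕ) → {N : ℕ} → G.obj N → G.obj (N - c)
  | _, 0, _, x => x
  | i, c+1, _, x => G.face (i+1) (G.dcomp (i+1) c x)

/-- ascending composite of degeneracies `s_i s_{i+1} ⋯ s_{i+c-1}`. -/
def scomp (G : SGrp) : (i c : ℕ) → {M : ℕ} → G.obj M → G.obj (M + c)
  | _, 0, _, x => x
  | i, c+1, _, x => G.deg (i+c) (G.scomp i c x)

/-- `x ↦ x d_j ⋯ d_{i+1} s_i ⋯ s_{j-1}`, an endomap of `G_N`. -/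
def ds (G : SGrp) (i j : ℕ) {N : ℕ} (x : G.obj N) : G.obj N :=
  G.gcast N (G.scomp i (min (j - i) N) (G.dcomp i (min (j - i) N) x))

/-- `x ↦ x d_j ⋯ d_{i+1} s_i ⋯ s_{n-1} : G_j → G_n`. -/
def dsTo (G : SGrp) (i n : ℕ) {j : ℕ} (x : G.obj j) : G.obj n :=
  G.gcast n (G.scomp i (n - i) (G.gcast i (G.dcomp i (j - i) x)))

/-- the `y_i` of the section `S_G`, defined by descending recursion (with fuel). -/
def yAux (G : SGrp) (n : ℕ) (g : ∀ j : ℕ, G.obj j) : ℕ → ℕ → G.obj n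
  | 0, _ => 1
  | fuel+1, i =>
      aProd (fun j => G.ds i j (G.yAux n g fuel j)⁻¹) (i+1) n *
      dProd (fun j => G.dsTo i n (g j)) i n

/-- `W̄_n G = ∏_{j = n-1}^{0} G_j`. -/
def WbarN (G : SGrp) (n : ℕ) : Type := ∀ j : Fin n, G.obj (j:ℕ)

/-- extension of a tuple in `W̄_n G` by `1`. -/
def gE (G : SGrp) {n : ℕ} (g : G.WbarN n) : ∀ j : ℕ, G.obj j :=
  fun j => if h : j < n then g ⟨j, h⟩ else 1

/-- the coretraction `(S_G)_n : W̄_n G → Diag_n NG = (G_n)^n`. -/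
def SGn (G : SGrp) (n : ℕ) (g : G.WbarN n) : Fin n → G.obj n :=
  fun i => G.yAux n (G.gE g) n (i:ℕ)

/-- extension of a tuple in `(G_n)^n` by `1`. -/
def xE (G : SGrp) {n : ℕ} (x : Fin n → G.obj n) : ℕ → G.obj n :=
  fun j => if h : j < n then x ⟨j, h⟩ else 1

/-- the structure map `W̄_θ : W̄_n G → W̄_m G` of the Kan classifying simplicial set. -/
def wbarMap (G : SGrp) {m n : ℕ} (θ : Fin (m+1) →o Fin (n+1)) (g : G.WbarN n) : G.WbarN m :=
  fun i => dProd (fun j => G.map (restrictOH θ (i:ℕ) j) (G.gE g j))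
    ((θ i.castSucc : Fin (n+1)) : ℕ) ((θ i.succ : Fin (n+1)) : ℕ)

/-- the structure map `(Diag NG)_θ : (G_n)^n → (G_m)^m` of the diagonal of the nerve. -/
def diagMap (G : SGrp) {m n : ℕ} (θ : Fin (m+1) →o Fin (n+1)) (x : Fin n → G.obj n) :
    Fin m → G.obj m :=
  fun i => dProd (fun j => G.map θ (G.xE x j))
    ((θ i.castSucc : Fin (n+1)) : ℕ) ((θ i.succ : Fin (n+1)) : ℕ)

/-- the retraction `(D_G)_n : Diag_n NG → W̄_n G`, `(g_i)_i ↦ (g_i d_n ⋯ d_{i+1})_i`. -/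
def DGn (G : SGrp) (n : ℕ) (x : Fin n → G.obj n) : G.WbarN n :=
  fun i => G.gcast (i:ℕ) (G.dcomp (i:ℕ) (n - (i:ℕ)) (x i))

/-- the components `y_i^{(n+1-k)}` of the homotopy `H`, by descending recursion (with fuel). -/
def hAux (G : SGrp) (n k : ℕ) (g : ℕ → G.obj n) : ℕ → ℕ → G.obj n
  | 0, _ => 1
  | fuel+1, i =>
      if k ≤ i + 1 then g i
      else
        aProd (fun j => G.ds i j (G.hAux n k g fuel j)⁻¹) (i+1) (k-1) *
        dProd (fun j => G.ds i (k-1) (g j)) i (k-1)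

end SGrp

/-- recover `k` from the simplex `τ^{n+1-k} ∈ Δ^1_n`: the number of vertices sent to `0`. -/
def kOf {n : ℕ} (t : Fin (n+1) →o Fin 2) : ℕ :=
  (Finset.univ.filter (fun i => t i = 0)).card

namespace SGrp

/-- the homotopy `H_n : Diag_n NG × Δ^1_n → Diag_n NG`. -/
def Hn (G : SGrp) (n : ℕ) (x : Fin n → G.obj n) (t : Fin (n+1) →o Fin 2) : Fin n → G.obj n :=
  fun i => G.hAux n (kOf t) (G.xE x) (n+1) (i:ℕ)

end SGrp

/-- morphisms of simplicial groups. -/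
structure SGrpHom (G G' : SGrp) where
  app : ∀ n, G.obj n → G'.obj n
  comm : ∀ {m n : ℕ} (θ : Fin (m+1) →o Fin (n+1)) (x : G.obj n),
    app m (G.map θ x) = G'.map θ (app n x)
  mul : ∀ (n : ℕ) (x y : G.obj n), app n (x * y) = app n x * app n y

end Paper

/-!
Each operator in the identity is induced by an order map: `x ↦ x d_j ⋯ d_{i+1} s_i ⋯ s_{j-1}`
by the endomap of `[N]` collapsing `[i, j]` onto `i`, and `x ↦ x d_j ⋯ d_{i+1} s_i ⋯ s_{n-1}`
by `p ↦ min p i`. Collapsing `[i, b]` after `[i, j]` collapses `[i, max j b]`, and `p ↦ min p i`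
absorbs every collapse starting at `i`. Hence applying `d_{k-1} ⋯ d_{i+1} s_i ⋯ s_{k-2}`, a group
endomorphism, to the recursion defining `y_i` and splitting its first product at `k` gives the
identity term by term.
-/

namespace Paper

section Products

variable {M : Type*} [Monoid M]

theorem aProd_congr {f f' : ℕ → M} {a : ℕ} :
    ∀ {b}, (∀ j, a ≤ j → j < b → f j = f' j) → aProd f a b = aProd f' a b
  | 0, _ => rfl
  | b+1, h => by
      simp only [aProd]
      split_ifs with hab
      · rw [aProd_congr fun j hj hjb => h j hj (by omega), h b hab (by omega)]
      · rfl

theorem dProd_congr {f f' : ℕ → M} {a : ℕ} :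
    ∀ {b}, (∀ j, a ≤ j → j < b → f j = f' j) → dProd f a b = dProd f' a b
  | 0, _ => rfl
  | b+1, h => by
      simp only [dProd]
      split_ifs with hab
      · rw [dProd_congr fun j hj hjb => h j hj (by omega), h b hab (by omega)]
      · rfl

theorem map_aProd {N F : Type*} [Monoid N] [FunLike F M N] [MonoidHomClass F M N] (φ : F)
    (f : ℕ → M) (a : ℕ) : ∀ b, φ (aProd f a b) = aProd (fun j => φ (f j)) a b
  | 0 => map_one φ
  | b+1 => by
      simp only [aProd]
      split_ifs
      · rw [map_mul, map_aProd φ f a b]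
      · exact map_one φ

theorem map_dProd {N F : Type*} [Monoid N] [FunLike F M N] [MonoidHomClass F M N] (φ : F)
    (f : ℕ → M) (a : ℕ) : ∀ b, φ (dProd f a b) = dProd (fun j => φ (f j)) a b
  | 0 => map_one φ
  | b+1 => by
      simp only [dProd]
      split_ifs
      · rw [map_mul, map_dProd φ f a b]
      · exact map_one φ

theorem aProd_mul_aProd (f : ℕ → M) {a b c : ℕ} (hab : a ≤ b) (hbc : b ≤ c) :
    aProd f a b * aProd f b c = aProd f a c := by
  induction c, hbc using Nat.le_induction with
  | base => cases b <;> simp [aProd]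
  | succ c hbc ih => simp only [aProd, if_pos hbc, if_pos (hab.trans hbc), ← ih, mul_assoc]

end Products

def dcompOH (i c a b : ℕ) : Fin (a+1) →o Fin (b+1) where
  toFun p := ⟨min (if (p:ℕ) ≤ i then (p:ℕ) else (p:ℕ) + c) b,
    Nat.lt_succ_of_le (Nat.min_le_right _ _)⟩
  monotone' p q hpq := by
    have : (p:ℕ) ≤ q := hpq
    simp only [Fin.mk_le_mk]
    split_ifs <;> omega

def scompOH (i c a b : ℕ) : Fin (a+1) →o Fin (b+1) where
  toFun p := ⟨min (if (p:ℕ) ≤ i then (p:ℕ) else max i ((p:ℕ) - c)) b,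
    Nat.lt_succ_of_le (Nat.min_le_right _ _)⟩
  monotone' p q hpq := by
    have : (p:ℕ) ≤ q := hpq
    simp only [Fin.mk_le_mk]
    split_ifs <;> omega

def collapseOH (i j N : ℕ) : Fin (N+1) →o Fin (N+1) where
  toFun p := ⟨if (p:ℕ) ≤ j then min (p:ℕ) i else p, by split_ifs <;> omega⟩
  monotone' p q hpq := by
    have : (p:ℕ) ≤ q := hpq
    simp only [Fin.mk_le_mk]
    split_ifs <;> omega

def retractOH (i n j : ℕ) : Fin (n+1) →o Fin (j+1) where
  toFun p := ⟨min (p:ℕ) (min i j), by omega⟩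
  monotone' p q hpq := by
    have : (p:ℕ) ≤ q := hpq
    simp only [Fin.mk_le_mk]
    omega

@[simp] theorem val_dcompOH (i c a b : ℕ) (p : Fin (a+1)) :
    (dcompOH i c a b p : ℕ) = min (if (p:ℕ) ≤ i then (p:ℕ) else (p:ℕ) + c) b := rfl

@[simp] theorem val_scompOH (i c a b : ℕ) (p : Fin (a+1)) :
    (scompOH i c a b p : ℕ) = min (if (p:ℕ) ≤ i then (p:ℕ) else max i ((p:ℕ) - c)) b := rfl

@[simp] theorem val_collapseOH (i j N : ℕ) (p : Fin (N+1)) :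
    (collapseOH i j N p : ℕ) = if (p:ℕ) ≤ j then min (p:ℕ) i else p := rfl

@[simp] theorem val_retractOH (i n j : ℕ) (p : Fin (n+1)) :
    (retractOH i n j p : ℕ) = min (p:ℕ) (min i j) := rfl

theorem val_δOH (k a b : ℕ) (p : Fin (a+1)) :
    (δOH k a b p : ℕ) = min (if (p:ℕ) < k then (p:ℕ) else (p:ℕ)+1) b := rfl

theorem val_σOH (k a b : ℕ) (p : Fin (a+1)) :
    (σOH k a b p : ℕ) = min (if (p:ℕ) ≤ k then (p:ℕ) else (p:ℕ)-1) b := rfl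

theorem collapseOH_comp_collapseOH (i j b N : ℕ) :
    (collapseOH i j N).comp (collapseOH i b N) = collapseOH i (max j b) N := by
  ext p
  simp only [OrderHom.comp_coe, Function.comp_apply, val_collapseOH]
  split_ifs <;> omega

theorem retractOH_comp_collapseOH (i b n j : ℕ) :
    (retractOH i n j).comp (collapseOH i b n) = retractOH i n j := by
  ext p
  simp only [OrderHom.comp_coe, Function.comp_apply, val_collapseOH, val_retractOH]
  split_ifs <;> omega

namespace SGrp

variable (G : SGrp)

theorem gcast_map {a N M : ℕ} (h : a = N) {Φ : Fin (a+1) →o Fin (M+1)}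
    {Ψ : Fin (N+1) →o Fin (M+1)} (hΦΨ : ∀ p : ℕ, fApp Φ p = fApp Ψ p) (x : G.obj M) :
    G.gcast N (G.map Φ x) = G.map Ψ x := by
  subst h
  have : Φ = Ψ := by
    ext p
    simpa only [fApp_coe] using hΦΨ p
  simp [gcast, this]

theorem dcomp_eq_map (c : ℕ) : ∀ (i : ℕ) {N : ℕ}, c ≤ N → ∀ x : G.obj N,
    G.dcomp i c x = G.map (dcompOH i c (N-c) N) x := by
  induction c with
  | zero =>
      intro i N _ x
      have : dcompOH i 0 (N-0) N = OrderHom.id := by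
        ext p
        simp only [val_dcompOH, OrderHom.id_coe, id_eq]
        split_ifs <;> omega
      rw [this, G.map_id]
      rfl
  | succ c ih =>
      intro i N hc x
      change G.map _ (G.dcomp (i+1) c x) = _
      rw [ih (i+1) (by omega) x, G.map_comp]
      congr 1
      ext p
      simp only [val_dcompOH, val_δOH, OrderHom.comp_coe, Function.comp_apply]
      split_ifs <;> omega

theorem scomp_eq_map (c : ℕ) : ∀ (i : ℕ) {M : ℕ} (x : G.obj M),
    G.scomp i c x = G.map (scompOH i c (M+c) M) x := by
  induction c with
  | zero =>
      intro i M x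
      have : scompOH i 0 (M+0) M = OrderHom.id := by
        ext p
        simp only [val_scompOH, OrderHom.id_coe, id_eq]
        split_ifs <;> omega
      rw [this, G.map_id]
      rfl
  | succ c ih =>
      intro i M x
      change G.map _ (G.scomp i c x) = _
      rw [ih i x, G.map_comp]
      congr 1
      ext p
      simp only [val_scompOH, val_σOH, OrderHom.comp_coe, Function.comp_apply, Nat.add_eq]
      split_ifs <;> omega

theorem ds_eq_map {i j N : ℕ} (hij : i ≤ j) (hjN : j ≤ N) (x : G.obj N) :
    G.ds i j x = G.map (collapseOH i j N) x := by
  have hc : min (j - i) N = j - i := by omega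
  rw [ds, hc, G.dcomp_eq_map _ i (by omega), G.scomp_eq_map, G.map_comp]
  refine G.gcast_map (by omega) (fun p => ?_) x
  simp only [fApp, val_dcompOH, val_scompOH, val_collapseOH, OrderHom.comp_coe,
    Function.comp_apply]
  split_ifs <;> omega

theorem dsTo_eq_map {i n j : ℕ} (hij : i ≤ j) (hin : i ≤ n) (x : G.obj j) :
    G.dsTo i n x = G.map (retractOH i n j) x := by
  rw [dsTo, G.dcomp_eq_map _ i (by omega),
    G.gcast_map (by omega : j - (j-i) = i) (Ψ := dcompOH i (j-i) i j) (fun p => ?_),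
    G.scomp_eq_map, G.map_comp]
  · refine G.gcast_map (by omega) (fun p => ?_) x
    simp only [fApp, val_dcompOH, val_scompOH, val_retractOH, OrderHom.comp_coe,
      Function.comp_apply]
    split_ifs <;> omega
  · simp only [fApp, val_dcompOH]
    split_ifs <;> omega

def dsHom {i j N : ℕ} (hij : i ≤ j) (hjN : j ≤ N) : G.obj N →* G.obj N :=
  MonoidHom.mk' (G.ds i j) fun x y => by simp only [G.ds_eq_map hij hjN, G.map_mul]

@[simp]
theorem dsHom_apply {i j N : ℕ} (hij : i ≤ j) (hjN : j ≤ N) (x : G.obj N) :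
    G.dsHom hij hjN x = G.ds i j x := rfl

theorem ds_ds {i j b N : ℕ} (hij : i ≤ j) (hjN : j ≤ N) (hib : i ≤ b) (hbN : b ≤ N)
    (x : G.obj N) : G.ds i b (G.ds i j x) = G.ds i (max j b) x := by
  rw [G.ds_eq_map hij hjN, G.ds_eq_map hib hbN, G.map_comp, collapseOH_comp_collapseOH,
    G.ds_eq_map (le_max_of_le_left hij) (max_le hjN hbN)]

theorem ds_dsTo {i b n j : ℕ} (hib : i ≤ b) (hbn : b ≤ n) (hij : i ≤ j) (y : G.obj j) :
    G.ds i b (G.dsTo i n y) = G.dsTo i n y := by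
  rw [G.dsTo_eq_map hij (hib.trans hbn), G.ds_eq_map hib hbn, G.map_comp,
    retractOH_comp_collapseOH]

theorem yAux_fuel_eq {n : ℕ} (g : ∀ j, G.obj j) (f₁ : ℕ) :
    ∀ {f₂ i : ℕ}, i < n → n - i ≤ f₁ → n - i ≤ f₂ → G.yAux n g f₁ i = G.yAux n g f₂ i := by
  induction f₁ with
  | zero => intros; omega
  | succ f₁ ih =>
      intro f₂ i hin h₁ h₂
      obtain ⟨f₂, rfl⟩ : ∃ f, f₂ = f + 1 := ⟨f₂ - 1, by omega⟩
      simp only [yAux]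
      congr 1
      exact aProd_congr fun j hij hjn => by rw [ih (f₂ := f₂) hjn (by omega) (by omega)]

theorem yAux_self {n : ℕ} (g : ∀ j, G.obj j) {i : ℕ} (hin : i < n) :
    G.yAux n g n i =
      aProd (fun j => G.ds i j (G.yAux n g n j)⁻¹) (i+1) n *
      dProd (fun j => G.dsTo i n (g j)) i n := by
  rw [G.yAux_fuel_eq g n (f₂ := n + 1) hin (by omega) (by omega), yAux]

end SGrp

end Paper

open Paper Paper.SGrp in
theorem stmt_19_general (G : SGrp) (n : ℕ) (g : G.WbarN n) (k i : ℕ)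
    (hkn : k ≤ n) (hi : i + 2 ≤ k) :
    G.ds i (k-1) (G.yAux n (G.gE g) n i) =
      aProd (fun j => G.ds i (k-1) (G.yAux n (G.gE g) n j)⁻¹) (i+1) k *
      aProd (fun j => G.ds i j (G.yAux n (G.gE g) n j)⁻¹) k n *
      dProd (fun j => G.dsTo i n (G.gE g j)) i n := by
  have hik : i ≤ k - 1 := by omega
  have hkn' : k - 1 ≤ n := by omega
  rw [G.yAux_self _ (by omega : i < n), ← G.dsHom_apply hik hkn', _root_.map_mul, map_aProd,
    map_dProd, ← aProd_mul_aProd _ (by omega : i + 1 ≤ k) hkn]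
  simp only [dsHom_apply]
  congr 1
  congr 1
  · refine aProd_congr fun j hij hjk => ?_
    rw [G.ds_ds (by omega) (by omega) hik hkn', max_eq_right (by omega)]
  · refine aProd_congr fun j hkj hjn => ?_
    rw [G.ds_ds (by omega) (by omega) hik hkn', max_eq_left (by omega)]
  · exact dProd_congr fun j hij _ => G.ds_dsTo hik hkn' hij _

open Paper Paper.SGrp in
/-- the key identity showing that the homotopy `H` is constant along `S_G`:
for `1 ≤ k ≤ n` and `i ≤ k-2`,
`y_i d_{k-1}⋯d_{i+1} s_i⋯s_{k-2} = (∏_{j=i+1}^{k-1} y_j^{-1} d_{k-1}⋯d_{i+1} s_i⋯s_{k-2})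
(∏_{j=k}^{n-1} y_j^{-1} d_j⋯d_{i+1} s_i⋯s_{j-1}) (∏_{j=n-1}^{i} g_j d_j⋯d_{i+1} s_i⋯s_{n-1})`. -/
theorem stmt_19 (G : SGrp) (n : ℕ) (g : G.WbarN n) (k i : ℕ)
    (hk1 : 1 ≤ k) (hkn : k ≤ n) (hi : i + 2 ≤ k) :
    G.ds i (k-1) (G.yAux n (G.gE g) n i) =
      aProd (fun j => G.ds i (k-1) (G.yAux n (G.gE g) n j)⁻¹) (i+1) k *
      aProd (fun j => G.ds i j (G.yAux n (G.gE g) n j)⁻¹) k n *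
      dProd (fun j => G.dsTo i n (G.gE g j)) i n :=
  stmt_19_general G n g k i hkn hi
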